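/- arXiv:math/0201257 — 4 statements merged into one kernel-verified Lean document; each statement's English description precedes it below -/
import Mathlib

section
/- Let X be a complete nonsingular toric 4-fold with T_N-invariant prime divisors D_1,…,D_n, let A be an abelian surface, and let φ : A → X be a totally nondegenerate finite morphism. If (φ*D_i)·(φ*D_j) = 0 and (φ*D_j)·(φ*D_k) = 0 for indices 1 ≤ i, j, k ≤ n, then (φ*D_i)·(φ*D_k) = 0. -/
open Finset

/-- An abelian surface over `ℂ`, recorded abstractly through its group `Div` of
divisor classes modulo algebraic equivalence, the intersection pairing, and the
effectivity and ampleness predicates.  The listed axioms are standard facts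
about divisors on an abelian surface. -/
structure AbelianSurface (Div : Type) [AddCommGroup Div] : Type where
  /-- the intersection pairing `D.E` on the abelian surface -/
  inter : Div →+ Div →+ ℤ
  inter_comm : ∀ D E : Div, inter D E = inter E D
  /-- `Effective D` ↔ `D` is the class of a (nonzero or zero) effective divisor -/
  Effective : Div → Prop
  effective_zero : Effective 0
  effective_add : ∀ {D E : Div}, Effective D → Effective E → Effective (D + E)
  /-- on an abelian surface two effective divisors intersect nonnegatively -/
  inter_nonneg_of_effective : ∀ {D E : Div}, Effective D → Effective E → 0 ≤ inter D E
  /-- `Ample D` ↔ `D` is the class of an ample divisor -/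
  Ample : Div → Prop
  /-- on an abelian surface an effective divisor with positive self-intersection is ample -/
  ample_of_effective_of_sq_pos : ∀ {D : Div}, Effective D → 0 < inter D D → Ample D
  /-- an ample divisor meets every nonzero effective divisor positively -/
  inter_pos_of_ample : ∀ {D E : Div}, Ample D → Effective E → E ≠ 0 → 0 < inter D E
  /-- an ample divisor has positive self-intersection -/
  sq_pos_of_ample : ∀ {D : Div}, Ample D → 0 < inter D D

/-- A complete nonsingular toric 4-fold `X`, presented by the primitive
generators `x_1, …, x_n ∈ N = ℤ⁴` of its fan `Σ` together with the predicate
`IsCone` recording which subsets of the rays span a cone of `Σ`. -/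
structure ToricFourfold (n : ℕ) : Type where
  /-- the set `G(Σ)` of primitive generators `x_1, …, x_n` of `Σ` in `N = ℤ⁴` -/
  gen : Fin n → Fin 4 → ℤ
  gen_injective : Function.Injective gen
  /-- `IsCone S` ↔ the rays `{x_i : i ∈ S}` span a cone of `Σ` -/
  IsCone : Finset (Fin n) → Prop
  isCone_empty : IsCone ∅
  isCone_singleton : ∀ i : Fin n, IsCone {i}
  isCone_mono : ∀ {S T : Finset (Fin n)}, S ⊆ T → IsCone T → IsCone S
  /-- nonsingularity: the generators of each cone form part of a `ℤ`-basis of `N` -/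
  nonsingular : ∀ {S : Finset (Fin n)}, IsCone S →
    ∃ b : Module.Basis (Fin 4) ℤ (Fin 4 → ℤ), ∃ ι : {x // x ∈ S} → Fin 4,
      Function.Injective ι ∧ ∀ i : {x // x ∈ S}, gen i.1 = b (ι i)
  /-- completeness: the cones of `Σ` cover `N_ℚ = ℚ⁴` -/
  complete : ∀ v : Fin 4 → ℚ, ∃ S : Finset (Fin n), IsCone S ∧
    ∃ c : Fin n → ℚ, (∀ i, 0 ≤ c i) ∧ (∀ i, i ∉ S → c i = 0) ∧
      ∀ k, v k = ∑ i, c i * (gen i k : ℚ)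

/-- A primitive collection of the fan of `X` (in the sense of Batyrev):
a minimal subset of the set of rays not spanning a cone. -/
def ToricFourfold.IsPrimitiveCollection {n : ℕ} (X : ToricFourfold n)
    (P : Finset (Fin n)) : Prop :=
  ¬ X.IsCone P ∧ ∀ Q : Finset (Fin n), Q ⊂ P → X.IsCone Q

/-- An (equivariant) isomorphism of complete nonsingular toric 4-folds,
i.e. an isomorphism of the corresponding fans. -/
def ToricFourfold.Iso {m n : ℕ} (X : ToricFourfold m) (Y : ToricFourfold n) : Prop :=
  ∃ (e : Fin m ≃ Fin n) (g : Matrix (Fin 4) (Fin 4) ℤ), IsUnit g.det ∧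
    (∀ i, Y.gen (e i) = g.mulVec (X.gen i)) ∧
    ∀ S : Finset (Fin m), X.IsCone S ↔ Y.IsCone (S.image e)

/-- A projective nonsingular toric 4-fold: a complete nonsingular toric 4-fold
together with the predicate recording which `T_N`-invariant divisors
`∑ i, c i • D i` are ample, and (projectivity) an ample effective such divisor. -/
structure ProjToricFourfold (n : ℕ) : Type extends ToricFourfold n where
  /-- `IsAmple c` ↔ the `T_N`-invariant divisor `∑ i, c i • D i` is ample on `X` -/
  IsAmple : (Fin n → ℤ) → Prop
  /-- projectivity: there is an ample effective `T_N`-invariant divisor -/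
  exists_ample : ∃ c : Fin n → ℤ, (∀ i, 0 ≤ c i) ∧ IsAmple c

/-- `X` is Fano: the anticanonical divisor `∑ i, D i` is ample. -/
def ProjToricFourfold.IsFano {n : ℕ} (X : ProjToricFourfold n) : Prop :=
  X.IsAmple fun _ => 1

/-- A totally nondegenerate finite morphism `φ : A → X` from an abelian surface
`A` to a complete nonsingular toric 4-fold `X`, recorded through the pullbacks
`C i = φ*(D i)` of the `T_N`-invariant prime divisors `D 1, …, D n` of `X`:
total nondegeneracy says that each `D i` meets `φ(A)`, so that each `C i` is a
nonzero effective divisor on `A`. -/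
structure TNDMorphism {n : ℕ} (X : ToricFourfold n) {Div : Type} [AddCommGroup Div]
    (A : AbelianSurface Div) : Type where
  /-- the pullbacks `C i = φ*(D i)` -/
  C : Fin n → Div
  effective : ∀ i, A.Effective (C i)
  /-- total nondegeneracy: `D i ∩ φ(A) ≠ ∅`, so `C i` is a nonzero effective divisor -/
  ne_zero : ∀ i, C i ≠ 0
  /-- if `{x i, x j}` spans no cone of `Σ` then `D i ∩ D j = ∅`, hence the
  pullbacks have intersection number zero -/
  inter_eq_zero : ∀ {i j : Fin n}, i ≠ j → ¬ X.IsCone {i, j} → A.inter (C i) (C j) = 0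
  /-- for every `m ∈ M` the pullback of the principal divisor
  `div 𝐞(m) = ∑ i ⟨m, x i⟩ D i` is (algebraically equivalent to) zero -/
  principal_rel : ∀ m : Fin 4 → ℤ, ∑ i, (∑ k, m k * X.gen i k) • C i = 0

/-- A totally nondegenerate finite morphism to a projective nonsingular toric
4-fold; finiteness of `φ` moreover makes pullbacks of ample divisors ample. -/
structure TNDMorphismProj {n : ℕ} (X : ProjToricFourfold n) {Div : Type} [AddCommGroup Div]
    (A : AbelianSurface Div) : Type extends TNDMorphism X.toToricFourfold A where
  /-- the pullback of an ample divisor under the finite morphism `φ` is ample -/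
  pull_ample : ∀ c : Fin n → ℤ, X.IsAmple c → A.Ample (∑ i, c i • C i)

/-- `X` admits a totally nondegenerate finite morphism from an abelian surface. -/
def ProjToricFourfold.HasTND {n : ℕ} (X : ProjToricFourfold n) : Prop :=
  ∃ (Div : Type) (inst : AddCommGroup Div) (A : @AbelianSurface Div inst),
    Nonempty (@TNDMorphismProj n X Div inst A)

/-- A totally nondegenerate embedding `φ : A ↪ X` of an abelian surface into a
projective nonsingular toric 4-fold: a totally nondegenerate finite morphism
which is a closed embedding.  Besides the finite-morphism data we record the
intersection-theoretic data available for an embedded surface: the quadruple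
intersection numbers `quad i j k l = D i · D j · D k · D l` on `X`, the class
`[A] = ∑ k l, aClass k l • (D k · D l)` of `A` in the Chow group `A²(X)`, the
compatibility `(φ*D i)·(φ*D j) = D i · D j · [A]`, and Van de Ven's relation
`c₂(X)·[A] = [A]²` where `c₂(X) = ∑_{i<j} D i · D j` for a nonsingular complete
toric variety. -/
structure TNDEmbedding {n : ℕ} (X : ProjToricFourfold n) {Div : Type} [AddCommGroup Div]
    (A : AbelianSurface Div) : Type extends TNDMorphismProj X A where
  /-- the intersection numbers `D i · D j · D k · D l` on `X` -/
  quad : Fin n → Fin n → Fin n → Fin n → ℤ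
  /-- the coefficients of the class `[A] ∈ A²(X)` in terms of the classes `D k · D l` -/
  aClass : Fin n → Fin n → ℤ
  /-- for the embedded surface `A ⊂ X`, `(φ*D i)·(φ*D j) = D i · D j · [A]` -/
  inter_eq_quad : ∀ i j : Fin n,
    A.inter (C i) (C j) = ∑ k, ∑ l, aClass k l * quad i j k l
  /-- Van de Ven's relation `c₂(X)·[A] = [A]²` -/
  van_de_ven : ∑ i, ∑ j ∈ Finset.Ioi i, A.inter (C i) (C j) =
    ∑ k, ∑ l, ∑ k', ∑ l', aClass k l * aClass k' l' * quad k l k' l'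

/-- `X` admits a totally nondegenerate embedding of an abelian surface. -/
def ProjToricFourfold.HasTNDEmbedding {n : ℕ} (X : ProjToricFourfold n) : Prop :=
  ∃ (Div : Type) (inst : AddCommGroup Div) (A : @AbelianSurface Div inst),
    Nonempty (@TNDEmbedding n X Div inst A)

/-- `ψ : Y → X` is a 2-blow-up: an equivariant blow-up of `X` along a
`T_N`-invariant subvariety of codimension 2.  On fans this is the star
subdivision of the fan of `X` at a 2-dimensional cone `{x i, x j}`, the new ray
(indexed last) being generated by `x i + x j`. -/
def IsTwoBlowUp {m n : ℕ} (Y : ProjToricFourfold m) (X : ProjToricFourfold n) : Prop :=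
  ∃ h : m = n + 1, ∃ i j : Fin n, i ≠ j ∧ X.IsCone {i, j} ∧
    (∀ k : Fin n, Y.gen (finCongr h.symm k.castSucc) = X.gen k) ∧
    Y.gen (finCongr h.symm (Fin.last n)) = X.gen i + X.gen j ∧
    ∀ S : Finset (Fin n),
      (Y.IsCone (S.image fun k => finCongr h.symm k.castSucc) ↔
        X.IsCone S ∧ ¬ {i, j} ⊆ S) ∧
      (Y.IsCone (insert (finCongr h.symm (Fin.last n))
          (S.image fun k => finCongr h.symm k.castSucc)) ↔
        ¬ {i, j} ⊆ S ∧ X.IsCone (S ∪ {i, j}))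

/-- The fan of `X` splits (after a change of coordinates in `N = ℤ⁴`) as the
product of two 2-dimensional complete fans, i.e. `X ≅ X₁ × X₂` for nonsingular
complete toric surfaces `X₁`, `X₂`.  When `X` is moreover Fano, the two factors
are nonsingular toric del Pezzo surfaces. -/
def ProjToricFourfold.IsProductOfSurfaces {n : ℕ} (X : ProjToricFourfold n) : Prop :=
  ∃ g : Matrix (Fin 4) (Fin 4) ℤ, IsUnit g.det ∧
    ∃ σ : Fin n → Bool,
      (∀ i, σ i = true → g.mulVec (X.gen i) 2 = 0 ∧ g.mulVec (X.gen i) 3 = 0) ∧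
      (∀ i, σ i = false → g.mulVec (X.gen i) 0 = 0 ∧ g.mulVec (X.gen i) 1 = 0) ∧
      ∀ S : Finset (Fin n), X.IsCone S ↔
        (X.IsCone (S.filter fun i => σ i = true) ∧ X.IsCone (S.filter fun i => σ i = false))

/-! If `D·F = 0` and `F·E = 0` with `D·E > 0`, then `D + E` is effective with positive
self-intersection, hence ample; but then it meets the nonzero effective divisor `F`
positively, whereas `(D + E)·F = D·F + E·F = 0`. Applied to `D = φ*D_i`, `E = φ*D_k`,
`F = φ*D_j`, total nondegeneracy supplies `F ≠ 0`. -/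

namespace AbelianSurface

variable {Div : Type} [AddCommGroup Div] (A : AbelianSurface Div)

theorem inter_add_self (D E : Div) :
    A.inter (D + E) (D + E) = A.inter D D + 2 * A.inter D E + A.inter E E := by
  simp only [map_add, AddMonoidHom.add_apply, A.inter_comm E D]
  ring

variable {D E F : Div}

theorem ample_add_of_inter_pos (hD : A.Effective D) (hE : A.Effective E)
    (hDE : 0 < A.inter D E) : A.Ample (D + E) := by
  refine A.ample_of_effective_of_sq_pos (A.effective_add hD hE) ?_
  have hDD := A.inter_nonneg_of_effective hD hD
  have hEE := A.inter_nonneg_of_effective hE hE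
  rw [A.inter_add_self]
  omega

theorem inter_eq_zero_of_inter_eq_zero (hD : A.Effective D) (hE : A.Effective E)
    (hF : A.Effective F) (hF0 : F ≠ 0) (hDF : A.inter D F = 0) (hFE : A.inter F E = 0) :
    A.inter D E = 0 := by
  by_contra hDE
  have hpos : 0 < A.inter D E :=
    (A.inter_nonneg_of_effective hD hE).lt_of_ne (Ne.symm hDE)
  have hsum : A.inter (D + E) F = 0 := by
    rw [map_add, AddMonoidHom.add_apply, hDF, A.inter_comm E, hFE, add_zero]
  exact (A.inter_pos_of_ample (A.ample_add_of_inter_pos hD hE hpos) hF hF0).ne' hsum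

end AbelianSurface

/-- **Lemma 3.2.** Let `X` be a complete nonsingular toric 4-fold with
`T_N`-invariant prime divisors `D 1, …, D n`, `A` an abelian surface and
`φ : A → X` a totally nondegenerate finite morphism.  If
`(φ*D i)·(φ*D j) = 0` and `(φ*D j)·(φ*D k) = 0`, then `(φ*D i)·(φ*D k) = 0`. -/
theorem inter_eq_zero_trans {n : ℕ} (X : ToricFourfold n)
    {Div : Type} [AddCommGroup Div] (A : AbelianSurface Div)
    (φ : TNDMorphism X A) (i j k : Fin n)
    (hij : A.inter (φ.C i) (φ.C j) = 0) (hjk : A.inter (φ.C j) (φ.C k) = 0) :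
    A.inter (φ.C i) (φ.C k) = 0 :=
  A.inter_eq_zero_of_inter_eq_zero (φ.effective i) (φ.effective k) (φ.effective j)
    (φ.ne_zero j) hij hjk
end

section
/- Let X be a projective nonsingular toric 4-fold with T_N-invariant prime divisors D_1,…,D_n. If there exists a totally nondegenerate finite morphism φ : A → X from an abelian surface A, then there exist indices 1 ≤ i < j ≤ n with (φ*D_i)·(φ*D_j) > 0. -/
open Finset

/-! The pullback `H = ∑ c_k φ*D_k` of an ample effective divisor of `X` is ample, so
`0 < H² = ∑ c_i c_j (φ*D_i)·(φ*D_j)` and some product `(φ*D_i)·(φ*D_j)` is positive.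
If `i = j`, then `φ*D_i` is effective with positive square, hence ample, and meets every
other nonzero effective `φ*D_j` positively; another ray exists because a complete fan
has rays on both sides of every coordinate hyperplane. -/

theorem Finset.exists_pos_of_sum_pos {ι M : Type*} [AddCommMonoid M] [LinearOrder M]
    [AddLeftMono M] {s : Finset ι} {f : ι → M} (h : 0 < ∑ i ∈ s, f i) :
    ∃ i ∈ s, 0 < f i :=
  exists_lt_of_sum_lt (by rwa [sum_const_zero])

theorem AddMonoidHom.apply_sum_zsmul_sum_zsmul {M : Type*} [AddCommGroup M] {ι κ : Type*}
    (B : M →+ M →+ ℤ) (s : Finset ι) (t : Finset κ) (c : ι → ℤ) (d : κ → ℤ)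
    (v : ι → M) (w : κ → M) :
    B (∑ i ∈ s, c i • v i) (∑ j ∈ t, d j • w j) =
      ∑ i ∈ s, ∑ j ∈ t, c i * d j * B (v i) (w j) := by
  simp only [map_sum, map_zsmul, AddMonoidHom.finsetSum_apply, AddMonoidHom.smul_apply,
    smul_eq_mul, Finset.mul_sum]
  rw [Finset.sum_comm]
  exact Finset.sum_congr rfl fun _ _ => Finset.sum_congr rfl fun _ _ => by ring

namespace AbelianSurface

variable {Div : Type} [AddCommGroup Div] (A : AbelianSurface Div)

theorem exists_inter_pos_of_ample_sum_zsmul {ι : Type*} [Fintype ι] {c : ι → ℤ}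
    (hc : ∀ i, 0 ≤ c i) {C : ι → Div} (hH : A.Ample (∑ i, c i • C i)) :
    ∃ i j, 0 < A.inter (C i) (C j) := by
  have hsq := A.sq_pos_of_ample hH
  rw [AddMonoidHom.apply_sum_zsmul_sum_zsmul] at hsq
  obtain ⟨i, -, hi⟩ := Finset.exists_pos_of_sum_pos hsq
  obtain ⟨j, -, hij⟩ := Finset.exists_pos_of_sum_pos hi
  exact ⟨i, j, pos_of_mul_pos_right hij (mul_nonneg (hc i) (hc j))⟩

theorem inter_pos_of_sq_pos {D E : Div} (hD : A.Effective D) (hDD : 0 < A.inter D D)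
    (hE : A.Effective E) (hE0 : E ≠ 0) : 0 < A.inter D E :=
  A.inter_pos_of_ample (A.ample_of_effective_of_sq_pos hD hDD) hE hE0

end AbelianSurface

namespace ToricFourfold

variable {n : ℕ}

theorem exists_mul_gen_pos (X : ToricFourfold n) (v : Fin 4 → ℚ) (k : Fin 4) (hv : v k ≠ 0) :
    ∃ i, 0 < v k * X.gen i k := by
  obtain ⟨-, -, c, hc, -, hsum⟩ := X.complete v
  have hpos : 0 < ∑ i, c i * (v k * X.gen i k) := by
    simpa [← Finset.mul_sum, mul_left_comm, ← hsum k] using mul_self_pos.mpr hv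
  obtain ⟨i, -, hi⟩ := Finset.exists_pos_of_sum_pos hpos
  exact ⟨i, pos_of_mul_pos_right hi (hc i)⟩

theorem nontrivial_fin (X : ToricFourfold n) : Nontrivial (Fin n) := by
  obtain ⟨i, hi⟩ := X.exists_mul_gen_pos (fun _ => 1) 0 one_ne_zero
  obtain ⟨j, hj⟩ := X.exists_mul_gen_pos (fun _ => -1) 0 (by norm_num)
  refine nontrivial_of_ne i j fun hij => ?_
  subst hij
  simp only [one_mul, neg_mul, Left.neg_pos_iff] at hi hj
  exact hi.not_gt hj

end ToricFourfold

/-- **Lemma 3.4.** Let `X` be a *projective* nonsingular toric 4-fold with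
`T_N`-invariant prime divisors `D 1, …, D n`.  If there exists a totally
nondegenerate finite morphism `φ : A → X` from an abelian surface `A`, then
`(φ*D i)·(φ*D j) > 0` for some `i < j`. -/
theorem exists_inter_pos {n : ℕ} (X : ProjToricFourfold n)
    {Div : Type} [AddCommGroup Div] (A : AbelianSurface Div)
    (φ : TNDMorphismProj X A) :
    ∃ i j : Fin n, i < j ∧ 0 < A.inter (φ.C i) (φ.C j) := by
  suffices ∃ i j, i ≠ j ∧ 0 < A.inter (φ.C i) (φ.C j) by
    obtain ⟨i, j, hne, hpos⟩ := this
    rcases hne.lt_or_gt with h | h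
    · exact ⟨i, j, h, hpos⟩
    · exact ⟨j, i, h, A.inter_comm (φ.C i) (φ.C j) ▸ hpos⟩
  obtain ⟨c, hc, hample⟩ := X.exists_ample
  obtain ⟨i, j, hij⟩ := A.exists_inter_pos_of_ample_sum_zsmul hc (φ.pull_ample c hample)
  by_cases heq : i = j
  · subst heq
    have := X.nontrivial_fin
    obtain ⟨k, hk⟩ := exists_ne i
    exact ⟨i, k, hk.symm,
      A.inter_pos_of_sq_pos (φ.effective i) hij (φ.effective k) (φ.ne_zero k)⟩
  · exact ⟨i, j, heq, hij⟩
end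

section
/- Let X be a projective nonsingular toric 4-fold and φ : A → X a totally nondegenerate finite morphism from an abelian surface. Define the graph Γ_φ on vertex set {1,…,n} where {i,j} is an edge iff i ≠ j and (φ*D_i)·(φ*D_j) = 0. Then Γ_φ is not complete; in particular, since every connected component of Γ_φ is complete, Γ_φ is not connected. -/
open Finset

/-- The graph `Γ_φ` attached to a totally nondegenerate finite morphism
`φ : A → X`: the vertices are `1, …, n` and `{i, j}` is an edge iff `i ≠ j`
and `(φ*D i)·(φ*D j) = 0`. -/
def Gamma {n : ℕ} (X : ToricFourfold n) {Div : Type} [AddCommGroup Div]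
    (A : AbelianSurface Div) (φ : TNDMorphism X A) : SimpleGraph (Fin n) where
  Adj i j := i ≠ j ∧ A.inter (φ.C i) (φ.C j) = 0
  symm := ⟨fun i j h => ⟨h.1.symm, (A.inter_comm (φ.C j) (φ.C i)).trans h.2⟩⟩
  loopless := ⟨fun i h => h.1 rfl⟩


/-! On an abelian surface an effective divisor of positive self-intersection is ample, so it
meets every nonzero effective divisor. Hence an effective divisor orthogonal to a nonzero
effective one has self-intersection zero, and orthogonality to a common nonzero effective
divisor is transitive (apply this to the sum of the two divisors). If all the pullbacks
`φ*D i` were pairwise orthogonal, the pullback `H` of an ample divisor would satisfy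
`0 < H · φ*D i = c i (φ*D i)²`, contradicting `(φ*D i)² = 0`; a complete fan has at least two
rays, so such a pair exists. Transitivity makes every connected component of `Γ_φ`
complete, so `Γ_φ` is not connected either. -/

namespace AbelianSurface

variable {Div : Type} [AddCommGroup Div] (A : AbelianSurface Div)

lemma inter_self_eq_zero_of_inter_eq_zero {C E : Div} (hC : A.Effective C)
    (hE : A.Effective E) (hE0 : E ≠ 0) (h : A.inter C E = 0) : A.inter C C = 0 := by
  refine le_antisymm (not_lt.mp fun hpos => ?_) (A.inter_nonneg_of_effective hC hC)
  have := A.inter_pos_of_ample (A.ample_of_effective_of_sq_pos hC hpos) hE hE0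
  omega

lemma inter_eq_zero_trans {C D E : Div} (hC : A.Effective C) (hD : A.Effective D)
    (hD0 : D ≠ 0) (hE : A.Effective E) (hCD : A.inter C D = 0) (hDE : A.inter D E = 0) :
    A.inter C E = 0 := by
  have hED : A.inter E D = 0 := (A.inter_comm E D).trans hDE
  have hCC := A.inter_self_eq_zero_of_inter_eq_zero hC hD hD0 hCD
  have hEE := A.inter_self_eq_zero_of_inter_eq_zero hE hD hD0 hED
  have hsum := A.inter_self_eq_zero_of_inter_eq_zero (A.effective_add hC hE) hD hD0
    (by simp only [map_add, AddMonoidHom.add_apply, hCD, hED, add_zero])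
  simp only [map_add, AddMonoidHom.add_apply, A.inter_comm E C] at hsum
  omega

lemma inter_sum_zsmul_of_pairwise_inter_eq_zero {ι : Type*} [Fintype ι] {C : ι → Div}
    (horth : Pairwise fun i j => A.inter (C i) (C j) = 0) (c : ι → ℤ) (i : ι) :
    A.inter (∑ k, c k • C k) (C i) = c i * A.inter (C i) (C i) := by
  rw [A.inter_comm, map_sum, Finset.sum_eq_single i (fun k _ hki => by
    rw [map_zsmul, A.inter_comm, horth hki, smul_zero]) (by simp)]
  rw [map_zsmul, smul_eq_mul, A.inter_comm]

lemma not_ample_sum_of_pairwise_inter_eq_zero {ι : Type*} [Fintype ι] {C : ι → Div}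
    (horth : Pairwise fun i j => A.inter (C i) (C j) = 0) {i j : ι} (hij : i ≠ j)
    (hi : A.Effective (C i)) (hi0 : C i ≠ 0) (hj : A.Effective (C j)) (hj0 : C j ≠ 0)
    (c : ι → ℤ) : ¬ A.Ample (∑ k, c k • C k) := by
  intro hH
  have hpos := A.inter_pos_of_ample hH hi hi0
  rw [A.inter_sum_zsmul_of_pairwise_inter_eq_zero horth,
    A.inter_self_eq_zero_of_inter_eq_zero hi hj hj0 (horth hij), mul_zero] at hpos
  exact hpos.false

end AbelianSurface

namespace ToricFourfold

lemma gen_ne_zero {n : ℕ} (X : ToricFourfold n) (i : Fin n) : X.gen i ≠ 0 := by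
  obtain ⟨b, ι, -, hgen⟩ := X.nonsingular (X.isCone_singleton i)
  rw [hgen ⟨i, Finset.mem_singleton_self i⟩]
  exact b.ne_zero _

/-- With no ray the fan is `{0}`; with a single ray `x` it cannot contain `-x`. -/
lemma two_le {n : ℕ} (X : ToricFourfold n) : 2 ≤ n := by
  by_contra! hlt
  interval_cases n
  · obtain ⟨S, -, c, -, -, hv⟩ := X.complete fun _ => 1
    simpa using hv 0
  · obtain ⟨k, hk⟩ := Function.ne_iff.mp (X.gen_ne_zero 0)
    obtain ⟨S, -, c, hc, -, hv⟩ := X.complete fun k => -(X.gen 0 k : ℚ)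
    have hvk := hv k
    rw [Fin.sum_univ_one] at hvk
    have hprod : (c 0 + 1) * (X.gen 0 k : ℚ) = 0 := by linarith
    rcases mul_eq_zero.mp hprod with h | h
    · linarith [hc 0]
    · exact hk (by exact_mod_cast h)

end ToricFourfold

section Gamma

variable {n : ℕ} {X : ToricFourfold n} {Div : Type} [AddCommGroup Div] {A : AbelianSurface Div}

lemma gamma_adj_of_reachable (φ : TNDMorphism X A) {i j : Fin n}
    (hreach : (Gamma X A φ).Reachable i j) (hij : i ≠ j) : (Gamma X A φ).Adj i j := by
  refine ⟨hij, ?_⟩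
  rw [SimpleGraph.reachable_iff_reflTransGen] at hreach
  suffices i = j ∨ A.inter (φ.C i) (φ.C j) = 0 from this.resolve_left hij
  clear hij
  induction hreach with
  | refl => exact Or.inl rfl
  | @tail k l _ hkl ih =>
    rcases ih with rfl | hik
    · exact Or.inr hkl.2
    · exact Or.inr (A.inter_eq_zero_trans (φ.effective i) (φ.effective k) (φ.ne_zero k)
        (φ.effective l) hik hkl.2)

lemma gamma_not_complete {X : ProjToricFourfold n} (φ : TNDMorphismProj X A) :
    ¬ ∀ i j : Fin n, i ≠ j → (Gamma X.toToricFourfold A φ.toTNDMorphism).Adj i j := by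
  intro hcomplete
  have : Nontrivial (Fin n) := Fin.nontrivial_iff_two_le.mpr X.two_le
  obtain ⟨i, j, hij⟩ := exists_pair_ne (Fin n)
  obtain ⟨c, -, hc⟩ := X.exists_ample
  exact A.not_ample_sum_of_pairwise_inter_eq_zero (fun k l hkl => (hcomplete k l hkl).2) hij
    (φ.effective i) (φ.ne_zero i) (φ.effective j) (φ.ne_zero j) c (φ.pull_ample c hc)

end Gamma

/-- **Remarks 3.5 and 3.3.** Let `X` be a projective nonsingular toric 4-fold
and `φ : A → X` a totally nondegenerate finite morphism from an abelian
surface.  Then the graph `Γ_φ` is not complete; in particular (since every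
connected component of `Γ_φ` is complete) `Γ_φ` is not connected. -/
theorem gamma_not_complete_and_not_connected {n : ℕ} (X : ProjToricFourfold n)
    {Div : Type} [AddCommGroup Div] (A : AbelianSurface Div)
    (φ : TNDMorphismProj X A) :
    (¬ ∀ i j : Fin n, i ≠ j →
        (Gamma X.toToricFourfold A φ.toTNDMorphism).Adj i j) ∧
      ¬ (Gamma X.toToricFourfold A φ.toTNDMorphism).Connected := by
  refine ⟨gamma_not_complete φ, fun hconn => gamma_not_complete φ ?_⟩
  exact fun i j hij => gamma_adj_of_reachable φ.toTNDMorphism (hconn i j) hij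
end

section
/- Let X be the nonsingular projective toric 4-fold whose fan Σ has primitive generators x_1 = (0,1,0,0), x_2 = (−1,1,0,0), x_3 = (1,0,0,0), x_4 = (0,0,1,0), x_5 = (a,b,−1,0), x_6 = (0,0,0,1), x_7 = (c,d,0,−1), x_8 = (0,−1,0,0) in N = ℤ^4 and whose primitive collections are {x_1,x_8}, {x_2,x_3}, {x_4,x_5}, {x_6,x_7}. If (a,b,c,d) is one of (0,1,0,1), (1,0,1,0), (1,0,−1,1) — giving the nonsingular toric Fano 4-folds of types L_1, L_2, L_10 respectively — then X admits no totally nondegenerate finite morphism from an abelian surface. -/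
open Finset

/-!
For a totally nondegenerate finite morphism and a ray `x_p`, the numbers `y_i = C_p · C_i` are
nonnegative, vanish when `{x_p, x_i}` spans no cone, and pulling back `div 𝐞(m)` gives
`∑ ⟨m, x_i⟩ y_i = 0`. If some `m` is positive on every ray adjacent to `x_p`, all `y_i` vanish,
contradicting that the ample pullback `∑ c_i C_i` (with `c_i ≥ 0`) meets `C_p` positively.
For type `ℒ` take `x_p = x_1`, whose only non-neighbour is `x_8`, and `m = (2, 4, 1, 1)`.
-/

namespace TNDMorphism

variable {n : ℕ} {X : ToricFourfold n} {Div : Type} [AddCommGroup Div] {A : AbelianSurface Div}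

theorem sum_pairing_mul_inter_eq_zero (φ : TNDMorphism X A) (m : Fin 4 → ℤ) (D : Div) :
    ∑ i, (∑ k, m k * X.gen i k) * A.inter D (φ.C i) = 0 := by
  simpa only [map_sum, map_zsmul, smul_eq_mul, map_zero] using
    congrArg (A.inter D) (φ.principal_rel m)

theorem inter_eq_zero_of_pairing_pos (φ : TNDMorphism X A) {p : Fin n} {m : Fin 4 → ℤ}
    (hm : ∀ i, X.IsCone {p, i} → 0 < ∑ k, m k * X.gen i k) (i : Fin n) :
    A.inter (φ.C p) (φ.C i) = 0 := by
  have inter_eq_zero_of_not_isCone : ∀ j, ¬ X.IsCone {p, j} → A.inter (φ.C p) (φ.C j) = 0 :=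
    fun j hj => φ.inter_eq_zero (by rintro rfl; simp [X.isCone_singleton] at hj) hj
  have term_nonneg : ∀ j ∈ univ, 0 ≤ (∑ k, m k * X.gen j k) * A.inter (φ.C p) (φ.C j) := by
    intro j _
    by_cases hj : X.IsCone {p, j}
    · exact mul_nonneg (hm j hj).le (A.inter_nonneg_of_effective (φ.effective p) (φ.effective j))
    · simp [inter_eq_zero_of_not_isCone j hj]
  by_cases hi : X.IsCone {p, i}
  · have hterm := (sum_eq_zero_iff_of_nonneg term_nonneg).mp
      (φ.sum_pairing_mul_inter_eq_zero m (φ.C p)) i (mem_univ i)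
    exact (mul_eq_zero.mp hterm).resolve_left (hm i hi).ne'
  · exact inter_eq_zero_of_not_isCone i hi

end TNDMorphism

theorem TNDMorphismProj.exists_inter_ne_zero {n : ℕ} {X : ProjToricFourfold n} {Div : Type}
    [AddCommGroup Div] {A : AbelianSurface Div} (φ : TNDMorphismProj X A) (p : Fin n) :
    ∃ i, A.inter (φ.C p) (φ.C i) ≠ 0 := by
  obtain ⟨c, -, hc⟩ := X.exists_ample
  have hpos := A.inter_pos_of_ample (φ.pull_ample c hc) (φ.effective p) (φ.ne_zero p)
  rw [A.inter_comm] at hpos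
  by_contra! h
  simp [h] at hpos

theorem ProjToricFourfold.not_hasTND_of_pairing_pos {n : ℕ} (X : ProjToricFourfold n)
    (p : Fin n) (m : Fin 4 → ℤ) (hm : ∀ i, X.IsCone {p, i} → 0 < ∑ k, m k * X.gen i k) :
    ¬ X.HasTND := by
  rintro ⟨Div, _, A, ⟨φ⟩⟩
  obtain ⟨i, hi⟩ := φ.exists_inter_ne_zero p
  exact hi (φ.inter_eq_zero_of_pairing_pos hm i)

theorem no_tnd_morphism_typeL_general (a b c d : ℤ) (X : ProjToricFourfold 8)
    (hg0 : X.gen 0 = ![0, 1, 0, 0]) (hg1 : X.gen 1 = ![-1, 1, 0, 0])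
    (hg2 : X.gen 2 = ![1, 0, 0, 0]) (hg3 : X.gen 3 = ![0, 0, 1, 0])
    (hg4 : X.gen 4 = ![a, b, -1, 0]) (hg5 : X.gen 5 = ![0, 0, 0, 1])
    (hg6 : X.gen 6 = ![c, d, 0, -1])
    (hPC : ∀ P : Finset (Fin 8), X.toToricFourfold.IsPrimitiveCollection P ↔
      (P = {0, 7} ∨ P = {1, 2} ∨ P = {3, 4} ∨ P = {5, 6}))
    (habcd : (a, b, c, d) = (0, 1, 0, 1) ∨ (a, b, c, d) = (1, 0, 1, 0) ∨
      (a, b, c, d) = (1, 0, -1, 1)) :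
    ¬ X.HasTND := by
  refine X.not_hasTND_of_pairing_pos 0 ![2, 4, 1, 1] fun i hi => ?_
  have h07 : ¬ X.IsCone {0, 7} := ((hPC {0, 7}).mpr (Or.inl rfl)).1
  simp only [Prod.mk.injEq] at habcd
  obtain ⟨rfl, rfl, rfl, rfl⟩ | ⟨rfl, rfl, rfl, rfl⟩ | ⟨rfl, rfl, rfl, rfl⟩ := habcd <;>
    fin_cases i <;> simp [Fin.sum_univ_four, hg0, hg1, hg2, hg3, hg4, hg5, hg6, h07] at hi ⊢

/-- **Section 5 (c), types `ℒ`.** Let `X` be the nonsingular projective toric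
4-fold whose fan `Σ` has primitive generators `x_1 = (0,1,0,0)`,
`x_2 = (-1,1,0,0)`, `x_3 = (1,0,0,0)`, `x_4 = (0,0,1,0)`, `x_5 = (a,b,-1,0)`,
`x_6 = (0,0,0,1)`, `x_7 = (c,d,0,-1)`, `x_8 = (0,-1,0,0)` in `N = ℤ⁴` and whose
primitive collections are `{x_1,x_8}`, `{x_2,x_3}`, `{x_4,x_5}`, `{x_6,x_7}`.
If `(a,b,c,d)` is one of `(0,1,0,1)`, `(1,0,1,0)`, `(1,0,-1,1)` — giving the
nonsingular toric Fano 4-folds of types `ℒ₁`, `ℒ₂`, `ℒ₁₀` respectively — then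
`X` admits no totally nondegenerate finite morphism from an abelian surface.
Rays are indexed from `0`, so `x_k` is `X.gen (k-1)`. -/
theorem no_tnd_morphism_typeL (a b c d : ℤ) (X : ProjToricFourfold 8)
    (hg0 : X.gen 0 = ![0, 1, 0, 0]) (hg1 : X.gen 1 = ![-1, 1, 0, 0])
    (hg2 : X.gen 2 = ![1, 0, 0, 0]) (hg3 : X.gen 3 = ![0, 0, 1, 0])
    (hg4 : X.gen 4 = ![a, b, -1, 0]) (hg5 : X.gen 5 = ![0, 0, 0, 1])
    (hg6 : X.gen 6 = ![c, d, 0, -1]) (hg7 : X.gen 7 = ![0, -1, 0, 0])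
    (hPC : ∀ P : Finset (Fin 8), X.toToricFourfold.IsPrimitiveCollection P ↔
      (P = {0, 7} ∨ P = {1, 2} ∨ P = {3, 4} ∨ P = {5, 6}))
    (habcd : (a, b, c, d) = (0, 1, 0, 1) ∨ (a, b, c, d) = (1, 0, 1, 0) ∨
      (a, b, c, d) = (1, 0, -1, 1)) :
    ¬ X.HasTND :=
  no_tnd_morphism_typeL_general a b c d X hg0 hg1 hg2 hg3 hg4 hg5 hg6 hPC habcd
end
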